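/- arXiv:2312.14567 — 2 statements merged into one kernel-verified Lean document; each statement's English description precedes it below -/
import Mathlib

section
/- Let κ ≥ 4, d ≥ 2, L > 0, μ = L/κ, and let H = diag(L, μ, μ, ..., μ) be a d×d diagonal matrix. Let w_0 = c_0·(1,...,1) with c_0 ≠ 0, and define the sequence w_{t+1} = (I - η_t H) w_t with 0 ≤ η_t ≤ 2/L for all t. Then for f(w) = (1/2) wᵀ H w and any T, one has f(w_T) ≥ f(w_0)/(L/(μ(d-1)) + 1) · exp(-8T/κ). -/
open Matrix Finset

/-!
Gradient descent on a diagonal quadratic decouples: at step `t` coordinate `i` is multiplied by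
`1 - η_t h_i`. On the `d - 1` flat directions (curvature `μ = L/κ`) a step `η_t ≤ 2/L` gives a
factor at least `1 - 2/κ ≥ exp(-4/κ)`, so these coordinates keep at least `exp(-4T/κ) c0`, and their
energy alone is `(1/2) μ (d-1) c0² exp(-8T/κ)`. This is the claimed bound, since
`1 / (L/(μ(d-1)) + 1)` is exactly the share of `f(w_0)` carried by the flat directions.
-/

theorem Real.exp_neg_two_mul_le_one_sub {x : ℝ} (hx₀ : 0 ≤ x) (hx : x ≤ 1 / 2) :
    Real.exp (-2 * x) ≤ 1 - x := by
  have hpos : 0 < 1 + 2 * x := by linarith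
  calc Real.exp (-2 * x) = (Real.exp (2 * x))⁻¹ := by rw [neg_mul, Real.exp_neg]
    _ ≤ (1 + 2 * x)⁻¹ := inv_anti₀ hpos (by linarith [Real.add_one_le_exp (2 * x)])
    _ ≤ 1 - x := by rw [inv_le_iff_one_le_mul₀ hpos]; nlinarith

theorem Real.exp_neg_two_mul_sum_le_prod_one_sub {ι : Type*} (s : Finset ι) (x : ι → ℝ)
    (hx : ∀ i ∈ s, 0 ≤ x i ∧ x i ≤ 1 / 2) :
    Real.exp (-2 * ∑ i ∈ s, x i) ≤ ∏ i ∈ s, (1 - x i) := by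
  rw [mul_sum, Real.exp_sum]
  exact prod_le_prod (fun i _ => (Real.exp_pos _).le)
    fun i hi => Real.exp_neg_two_mul_le_one_sub (hx i hi).1 (hx i hi).2

theorem exp_neg_four_mul_div_le_prod_one_sub {L κ : ℝ} (hL : 0 < L) (hκ : 4 ≤ κ) {η : ℕ → ℝ}
    (hη : ∀ t, 0 ≤ η t ∧ η t ≤ 2 / L) (T : ℕ) :
    Real.exp (-4 * T / κ) ≤ ∏ t ∈ range T, (1 - η t * (L / κ)) := by
  have hκ₀ : 0 < κ := by linarith
  have hstep : ∀ t, 0 ≤ η t * (L / κ) ∧ η t * (L / κ) ≤ 2 / κ := fun t => by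
    refine ⟨mul_nonneg (hη t).1 (by positivity), ?_⟩
    calc η t * (L / κ) ≤ 2 / L * (L / κ) := by gcongr; exact (hη t).2
      _ = 2 / κ := by field_simp
  calc Real.exp (-4 * T / κ) ≤ Real.exp (-2 * ∑ t ∈ range T, η t * (L / κ)) := by
        refine Real.exp_le_exp.2 ?_
        have := sum_le_sum fun t (_ : t ∈ range T) => (hstep t).2
        rw [sum_const, card_range, nsmul_eq_mul] at this
        rw [show -4 * (T : ℝ) / κ = -2 * (T * (2 / κ)) by ring]; linarith
    _ ≤ _ := Real.exp_neg_two_mul_sum_le_prod_one_sub _ _ fun t _ =>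
        ⟨(hstep t).1, (hstep t).2.trans (by rw [div_le_div_iff₀ hκ₀ two_pos]; linarith)⟩

section DiagonalIteration

variable {ι R : Type*} [Fintype ι] [DecidableEq ι] [CommRing R]

theorem Matrix.one_sub_smul_diagonal_mulVec_apply (c : R) (h v : ι → R) (i : ι) :
    ((1 - c • diagonal h) *ᵥ v) i = (1 - c * h i) * v i := by
  rw [sub_mulVec, one_mulVec, smul_mulVec, Pi.sub_apply, Pi.smul_apply, mulVec_diagonal,
    smul_eq_mul]
  ring

theorem Matrix.dotProduct_diagonal_mulVec_self (h x : ι → R) :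
    x ⬝ᵥ diagonal h *ᵥ x = ∑ i, h i * x i ^ 2 := by
  simp only [dotProduct, mulVec_diagonal]
  exact sum_congr rfl fun i _ => by ring

theorem apply_eq_prod_mul_of_diagonal_iteration {η : ℕ → R} {h : ι → R} {w : ℕ → ι → R}
    (hrec : ∀ t, w (t + 1) = (1 - η t • diagonal h) *ᵥ w t) (t : ℕ) (i : ι) :
    w t i = (∏ s ∈ range t, (1 - η s * h i)) * w 0 i := by
  induction t with
  | zero => simp
  | succ t ih => rw [hrec, one_sub_smul_diagonal_mulVec_apply, ih, prod_range_succ]; ring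

end DiagonalIteration

theorem Finset.sum_ite_eq_mul_add_sum_erase {ι R : Type*} [Fintype ι] [DecidableEq ι]
    [CommSemiring R] (z : ι) (a b : R) (g : ι → R) :
    ∑ i, (if i = z then a else b) * g i = a * g z + b * ∑ i ∈ univ.erase z, g i := by
  rw [← add_sum_erase univ _ (mem_univ z), if_pos rfl, mul_sum]
  exact congrArg _ (sum_congr rfl fun i hi => by rw [if_neg (ne_of_mem_erase hi)])

theorem sgd_lower_bound_quadratic
    (d : ℕ) (hd : 2 ≤ d) (L μ κ c0 : ℝ) (hL : 0 < L) (hκ : 4 ≤ κ)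
    (hμ : μ = L / κ)
    (H : Matrix (Fin d) (Fin d) ℝ)
    (hH : H = Matrix.diagonal (fun i => if i = ⟨0, by omega⟩ then L else μ))
    (η : ℕ → ℝ) (hη : ∀ t, 0 ≤ η t ∧ η t ≤ 2 / L)
    (w : ℕ → Fin d → ℝ)
    (hw0 : w 0 = fun _ => c0)
    (hrec : ∀ t, w (t + 1) = ((1 : Matrix (Fin d) (Fin d) ℝ) - η t • H).mulVec (w t))
    (f : (Fin d → ℝ) → ℝ) (hf : f = fun x => (1 / 2) * (x ⬝ᵥ H.mulVec x))
    (T : ℕ) :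
    f (w T) ≥ f (w 0) / (L / (μ * (d - 1)) + 1) * Real.exp (-8 * T / κ) := by
  subst hμ hH
  set z : Fin d := ⟨0, by omega⟩
  have hd₁ : (0 : ℝ) < d - 1 := by
    have : (2 : ℝ) ≤ d := by exact_mod_cast hd
    linarith
  have hcard : ((univ.erase z).card : ℝ) = d - 1 := by
    rw [card_erase_of_mem (mem_univ z), card_univ, Fintype.card_fin, Nat.cast_pred (by omega)]
  have hf_eq (x : Fin d → ℝ) :
      f x = 1 / 2 * (L * x z ^ 2 + L / κ * ∑ i ∈ univ.erase z, x i ^ 2) := by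
    simp only [hf, dotProduct_diagonal_mulVec_self, sum_ite_eq_mul_add_sum_erase]
  set P := ∏ t ∈ range T, (1 - η t * (L / κ))
  have hwT : ∀ i ∈ univ.erase z, w T i = P * c0 := fun i hi => by
    rw [apply_eq_prod_mul_of_diagonal_iteration hrec, if_neg (ne_of_mem_erase hi), hw0]
  have hP : Real.exp (-8 * T / κ) ≤ P ^ 2 := by
    rw [show -8 * (T : ℝ) / κ = (2 : ℕ) * (-4 * T / κ) by push_cast; ring, Real.exp_nat_mul]
    exact pow_le_pow_left₀ (Real.exp_pos _).le (exp_neg_four_mul_div_le_prod_one_sub hL hκ hη T) 2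
  have hf0 : f (w 0) / (L / (L / κ * (d - 1)) + 1) = 1 / 2 * (L / κ) * (d - 1) * c0 ^ 2 := by
    rw [hf_eq, hw0, sum_const, nsmul_eq_mul, hcard]
    field_simp
  rw [ge_iff_le, hf0, hf_eq, sum_congr rfl fun i hi => by rw [hwT i hi], sum_const, nsmul_eq_mul,
    hcard]
  calc 1 / 2 * (L / κ) * (d - 1) * c0 ^ 2 * Real.exp (-8 * T / κ)
      ≤ 1 / 2 * (L / κ) * (d - 1) * c0 ^ 2 * P ^ 2 := by gcongr
    _ = 1 / 2 * (L / κ * ((d - 1) * (P * c0) ^ 2)) := by ring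
    _ ≤ 1 / 2 * (L * w T z ^ 2 + L / κ * ((d - 1) * (P * c0) ^ 2)) := by
        gcongr
        exact le_add_of_nonneg_left (by positivity)
end

section
/- For the quadratic f(w) = (1/2)wᵀHw - bᵀw with H symmetric positive definite and heavy-ball iterates with pairwise-independent, unbiased gradient noise satisfying E[n_t n_tᵀ] ⪯ σ²H, the expected excess risk satisfies 2·E[f(w_T) - f(w_*)] ≤ Σ_{j=1}^d λ_j ‖T_{T-1,j}⋯T_{0,j}‖² · E‖(ΠᵀVᵀ x_0)_{2j-1:2j}‖² + σ² Σ_{j=1}^d λ_j² Σ_{τ=0}^{T-1} η_τ² ‖T_{T-1,j}⋯T_{τ+1,j}‖², where x_0 = (w_0 - w_*, w_{-1} - w_*) and T_{t,j} = [[1+β-η_t λ_j, -β],[1,0]]. -/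
open Matrix MeasureTheory ProbabilityTheory

/-- The ordered product `M_{b-1} M_{b-2} ⋯ M_a` (the identity if `b ≤ a`). -/
def matProd {ι : Type*} [Fintype ι] [DecidableEq ι]
    (M : ℕ → Matrix ι ι ℝ) (a b : ℕ) : Matrix ι ι ℝ :=
  ((List.range (b - a)).map (fun k => M (b - 1 - k))).prod

/-- Spectral (operator) norm of a matrix acting on Euclidean space. -/
noncomputable def specNorm {ι : Type*} [Fintype ι] [DecidableEq ι]
    (A : Matrix ι ι ℝ) : ℝ :=
  ‖Matrix.toEuclideanCLM (𝕜 := ℝ) A‖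

/-- The perfect-shuffle (interleaving) permutation matrix. -/
def shufflePerm (d : ℕ) : Matrix (Fin d ⊕ Fin d) (Fin d × Fin 2) ℝ :=
  fun s p =>
    match s with
    | Sum.inl i => if i = p.1 ∧ p.2 = 0 then 1 else 0
    | Sum.inr i => if i = p.1 ∧ p.2 = 1 then 1 else 0

/-- `blkdiag(U, U)`. -/
def blkDiag2 {d : ℕ} (U : Matrix (Fin d) (Fin d) ℝ) :
    Matrix (Fin d ⊕ Fin d) (Fin d ⊕ Fin d) ℝ :=
  Matrix.fromBlocks U 0 0 U

lemma hbMulVecSum {ι m n' : Type*} [Fintype n'] (A : Matrix m n' ℝ) (s : Finset ι)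
    (f : ι → n' → ℝ) : A *ᵥ (∑ i ∈ s, f i) = ∑ i ∈ s, A *ᵥ f i := by
  funext k
  simp only [Matrix.mulVec, dotProduct, Finset.sum_apply, Finset.mul_sum]
  exact Finset.sum_comm

lemma hbVec2Eq {p q r s : ℝ} (h1 : p = r) (h2 : q = s) : ![p, q] = ![r, s] := by rw [h1, h2]

lemma hbMulVecFin2 (a b c e p q : ℝ) :
    !![a, b; c, e] *ᵥ ![p, q] = ![a * p + b * q, c * p + e * q] := by
  funext i
  fin_cases i <;>
    simp [Matrix.mulVec, dotProduct, Fin.sum_univ_two]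

lemma hbSmulVec2 (r p q : ℝ) : r • (![p, q] : Fin 2 → ℝ) = ![r * p, r * q] := by
  funext i
  fin_cases i <;> simp

lemma hbAddVec2 (p q r s : ℝ) : (![p, q] : Fin 2 → ℝ) + ![r, s] = ![p + r, q + s] := by
  funext i
  fin_cases i <;> simp


lemma matProd_of_le {ι : Type*} [Fintype ι] [DecidableEq ι]
    (M : ℕ → Matrix ι ι ℝ) {a b : ℕ} (h : b ≤ a) : matProd M a b = 1 := by
  simp [matProd, Nat.sub_eq_zero_of_le h]

lemma matProd_succ {ι : Type*} [Fintype ι] [DecidableEq ι]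
    (M : ℕ → Matrix ι ι ℝ) {a b : ℕ} (h : a ≤ b) :
    matProd M a (b + 1) = M b * matProd M a b := by
  unfold matProd
  rw [show b + 1 - a = (b - a) + 1 from by omega, List.range_succ_eq_map]
  simp only [List.map_cons, List.prod_cons, List.map_map, Function.comp]
  have e1 : b + 1 - 1 - 0 = b := by omega
  have e2 : ((fun k => M (b + 1 - 1 - k)) ∘ Nat.succ) = fun k => M (b - 1 - k) := by
    funext k
    simp only [Function.comp_apply]
    rw [show b + 1 - 1 - k.succ = b - 1 - k from by omega]
  rw [e1, e2]

lemma specNorm_nonneg {ι : Type*} [Fintype ι] [DecidableEq ι]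
    (A : Matrix ι ι ℝ) : 0 ≤ specNorm A := norm_nonneg _

lemma specNorm_mulVec_sq {ι : Type*} [Fintype ι] [DecidableEq ι]
    (A : Matrix ι ι ℝ) (x : ι → ℝ) :
    ∑ i, ((A *ᵥ x) i) ^ 2 ≤ (specNorm A) ^ 2 * ∑ i, (x i) ^ 2 := by
  have h := (Matrix.toEuclideanCLM (𝕜 := ℝ) A).le_opNorm ((WithLp.equiv 2 (ι → ℝ)).symm x)
  have hx : ‖(WithLp.equiv 2 (ι → ℝ)).symm x‖ ^ 2 = ∑ i, (x i) ^ 2 := by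
    rw [EuclideanSpace.norm_eq, Real.sq_sqrt (by positivity)]
    simp [Real.norm_eq_abs, sq_abs]
  have hAx : ‖Matrix.toEuclideanCLM (𝕜 := ℝ) A ((WithLp.equiv 2 (ι → ℝ)).symm x)‖ ^ 2
      = ∑ i, ((A *ᵥ x) i) ^ 2 := by
    rw [WithLp.equiv_symm_apply, Matrix.toEuclideanCLM_toLp, EuclideanSpace.norm_eq,
      Real.sq_sqrt (by positivity)]
    simp [Real.norm_eq_abs, sq_abs, Matrix.toLin'_apply]
  calc ∑ i, ((A *ᵥ x) i) ^ 2 = _ := hAx.symm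
    _ ≤ (specNorm A * ‖(WithLp.equiv 2 (ι → ℝ)).symm x‖) ^ 2 := by
        apply pow_le_pow_left₀ (norm_nonneg _) h
    _ = (specNorm A) ^ 2 * ∑ i, (x i) ^ 2 := by rw [mul_pow, hx]

lemma memL2_mul_integrable {Ω : Type*} [MeasurableSpace Ω] {μ : Measure Ω}
    {f g : Ω → ℝ} (hf : MemLp f 2 μ) (hg : MemLp g 2 μ) :
    Integrable (fun ω => f ω * g ω) μ := by
  have h : MemLp (g • f) 1 μ := hf.smul hg (hpqr := ⟨by rw [inv_one]; exact ENNReal.inv_two_add_inv_two⟩)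
  exact memLp_one_iff_integrable.mp (by simpa [Pi.smul_apply, smul_eq_mul, mul_comm, Pi.mul_def] using h)

lemma integral_sq_affine {Ω : Type*} [MeasurableSpace Ω] (μ : Measure Ω) [IsProbabilityMeasure μ]
    (N : ℕ) (c : ℝ) (q : ℕ → ℝ) (h : ℕ → Ω → ℝ)
    (hL2 : ∀ τ, MemLp (h τ) 2 μ)
    (hzero : ∀ τ, ∫ ω, h τ ω ∂μ = 0)
    (horth : ∀ τ τ', τ ≠ τ' → ∫ ω, h τ ω * h τ' ω ∂μ = 0) :
    ∫ ω, (c + ∑ τ ∈ Finset.range N, h τ ω * q τ) ^ 2 ∂μ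
      = c ^ 2 + ∑ τ ∈ Finset.range N, (∫ ω, (h τ ω) ^ 2 ∂μ) * (q τ) ^ 2 := by
  classical
  set S : Ω → ℝ := fun ω => ∑ τ ∈ Finset.range N, h τ ω * q τ with hS
  have int1 : ∀ τ : ℕ, Integrable (h τ) μ := fun τ => (hL2 τ).integrable one_le_two
  have intp : ∀ τ τ' : ℕ, Integrable (fun ω => h τ ω * h τ' ω) μ :=
    fun τ τ' => memL2_mul_integrable (hL2 τ) (hL2 τ')
  have key : ∀ ω, (c + S ω) ^ 2 =
      c ^ 2 + (2 * c) * S ω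
        + ∑ τ ∈ Finset.range N, ∑ τ' ∈ Finset.range N,
            (q τ * q τ') * (h τ ω * h τ' ω) := by
    intro ω
    have hSS : S ω * S ω = ∑ τ ∈ Finset.range N, ∑ τ' ∈ Finset.range N,
        (q τ * q τ') * (h τ ω * h τ' ω) := by
      rw [hS]
      rw [Finset.sum_mul_sum]
      exact Finset.sum_congr rfl fun τ _ => Finset.sum_congr rfl fun τ' _ => by ring
    have : (c + S ω) ^ 2 = c ^ 2 + (2 * c) * S ω + S ω * S ω := by ring
    rw [this, hSS]
  have intS : Integrable S μ :=
    integrable_finset_sum _ fun τ _ => (int1 τ).mul_const (q τ)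
  have intD : Integrable (fun ω => ∑ τ ∈ Finset.range N, ∑ τ' ∈ Finset.range N,
      (q τ * q τ') * (h τ ω * h τ' ω)) μ :=
    integrable_finset_sum _ fun τ _ => integrable_finset_sum _ fun τ' _ =>
      (intp τ τ').const_mul _
  calc ∫ ω, (c + S ω) ^ 2 ∂μ
      = ∫ ω, (c ^ 2 + (2 * c) * S ω
          + ∑ τ ∈ Finset.range N, ∑ τ' ∈ Finset.range N,
              (q τ * q τ') * (h τ ω * h τ' ω)) ∂μ := by
        exact integral_congr_ae (Filter.Eventually.of_forall key)
    _ = (∫ _ω, c ^ 2 ∂μ) + (∫ ω, (2 * c) * S ω ∂μ)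
          + ∫ ω, ∑ τ ∈ Finset.range N, ∑ τ' ∈ Finset.range N,
              (q τ * q τ') * (h τ ω * h τ' ω) ∂μ := by
        rw [integral_add (f := fun ω => c ^ 2 + (2 * c) * S ω)
            (g := fun ω => ∑ τ ∈ Finset.range N, ∑ τ' ∈ Finset.range N,
              (q τ * q τ') * (h τ ω * h τ' ω))
            ((integrable_const _).add (intS.const_mul _)) intD,
          integral_add (f := fun _ω => c ^ 2) (g := fun ω => (2 * c) * S ω)
            (integrable_const _) (intS.const_mul _)]
    _ = c ^ 2 + ∑ τ ∈ Finset.range N, (∫ ω, (h τ ω) ^ 2 ∂μ) * (q τ) ^ 2 := by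
        have h1 : (∫ _ω, c ^ 2 ∂μ) = c ^ 2 := by simp
        have h2 : (∫ ω, (2 * c) * S ω ∂μ) = 0 := by
          rw [integral_const_mul, hS]
          rw [integral_finset_sum _ fun τ _ => (int1 τ).mul_const (q τ)]
          simp [integral_mul_const, hzero]
        have h3 : ∫ ω, ∑ τ ∈ Finset.range N, ∑ τ' ∈ Finset.range N,
            (q τ * q τ') * (h τ ω * h τ' ω) ∂μ
            = ∑ τ ∈ Finset.range N, (∫ ω, (h τ ω) ^ 2 ∂μ) * (q τ) ^ 2 := by
          rw [integral_finset_sum _ fun τ _ => integrable_finset_sum _ fun τ' _ =>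
            (intp τ τ').const_mul _]
          refine Finset.sum_congr rfl fun τ _hτ => ?_
          rw [integral_finset_sum _ fun τ' _ => (intp τ τ').const_mul _]
          rw [Finset.sum_eq_single τ]
          · rw [integral_const_mul]
            have : ∫ ω, h τ ω * h τ ω ∂μ = ∫ ω, (h τ ω) ^ 2 ∂μ := by
              congr 1; funext ω; ring
            rw [this]; ring
          · intro τ' _ hne
            rw [integral_const_mul, horth τ τ' (Ne.symm hne)]
            ring
          · intro hτ; exact absurd _hτ hτ
        rw [h1, h2, h3, add_zero]

/-- Bias–variance bound for heavy ball on a quadratic with anisotropic gradient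
noise: `2·E[f(w_T) - f(w_*)]` is bounded by the sum of a bias term
`Σ_j λ_j ‖T_{T-1,j}⋯T_{0,j}‖² ‖(ΠᵀVᵀx₀)_{2j-1:2j}‖²` and a variance term
`σ² Σ_j λ_j² Σ_τ η_τ² ‖T_{T-1,j}⋯T_{τ+1,j}‖²`. -/
theorem heavyBall_bias_variance_bound
    {Ω : Type*} [MeasurableSpace Ω] (μ : Measure Ω) [IsProbabilityMeasure μ]
    (d : ℕ) (U : Matrix (Fin d) (Fin d) ℝ) (hU : Uᵀ * U = 1)
    (lam : Fin d → ℝ)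
    (H : Matrix (Fin d) (Fin d) ℝ) (hH : H = U * Matrix.diagonal lam * Uᵀ)
    (hpd : H.PosDef) (hsym : H.IsSymm)
    (b : Fin d → ℝ)
    (f : (Fin d → ℝ) → ℝ)
    (hf : f = fun x => (1 / 2) * (x ⬝ᵥ H.mulVec x) - b ⬝ᵥ x)
    (wstar : Fin d → ℝ) (hwstar : wstar = H⁻¹.mulVec b)
    (β σ : ℝ) (η : ℕ → ℝ)
    (w v : ℕ → Ω → (Fin d → ℝ)) (n : ℕ → Ω → (Fin d → ℝ))
    (w0 v0 : Fin d → ℝ) (hw0 : ∀ ω, w 0 ω = w0) (hv0 : ∀ ω, v 0 ω = v0)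
    (hv : ∀ t ω, v (t + 1) ω = β • v t ω + η t • (H.mulVec (w t ω - wstar) - n t ω))
    (hw : ∀ t ω, w (t + 1) ω = w t ω - v (t + 1) ω)
    (hmeas : ∀ t, Measurable (n t))
    (hindep : ∀ i j, i ≠ j → IndepFun (n i) (n j) μ)
    (hmean : ∀ t k, ∫ ω, n t ω k ∂μ = 0)
    (hL2 : ∀ t k, MemLp (fun ω => n t ω k) 2 μ)
    (hnoise : ∀ t, ((σ ^ 2 • H) -
      Matrix.of fun i j => ∫ ω, n t ω i * n t ω j ∂μ).PosSemidef)
    (Tb : ℕ → Fin d → Matrix (Fin 2) (Fin 2) ℝ)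
    (hTb : ∀ t j, Tb t j = !![1 + β - η t * lam j, -β; 1, 0])
    (x0 : Fin d ⊕ Fin d → ℝ)
    (hx0 : x0 = Sum.elim (w0 - wstar) (w0 + v0 - wstar))
    (y : Fin d × Fin 2 → ℝ)
    (hy : y = (shufflePerm d)ᵀ.mulVec ((blkDiag2 U)ᵀ.mulVec x0))
    (T : ℕ) :
    2 * ((∫ ω, f (w T ω) ∂μ) - f wstar) ≤
      (∑ j : Fin d, lam j * (specNorm (matProd (fun t => Tb t j) 0 T)) ^ 2 *
        ((y (j, 0)) ^ 2 + (y (j, 1)) ^ 2)) +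
      σ ^ 2 * ∑ j : Fin d, (lam j) ^ 2 * ∑ τ ∈ Finset.range T,
        (η τ) ^ 2 * (specNorm (matProd (fun t => Tb t j) (τ + 1) T)) ^ 2 := by
  classical
  have hUtH : Uᵀ * H = Matrix.diagonal lam * Uᵀ := by
    rw [hH, ← Matrix.mul_assoc, ← Matrix.mul_assoc, hU, Matrix.one_mul]
  have hmulVecUH : ∀ z : Fin d → ℝ, Uᵀ *ᵥ (H *ᵥ z) = fun j => lam j * (Uᵀ *ᵥ z) j := by
    intro z
    rw [Matrix.mulVec_mulVec, hUtH, ← Matrix.mulVec_mulVec]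
    funext j
    rw [Matrix.mulVec_diagonal]
  have hdet : IsUnit H.det := isUnit_iff_ne_zero.mpr hpd.det_pos.ne'
  have hHw : H *ᵥ wstar = b := by
    rw [hwstar, Matrix.mulVec_mulVec, Matrix.mul_nonsing_inv _ hdet, Matrix.one_mulVec]
  have hwHx : ∀ x : Fin d → ℝ, wstar ⬝ᵥ (H *ᵥ x) = b ⬝ᵥ x := by
    intro x
    rw [Matrix.dotProduct_mulVec, ← hsym, Matrix.vecMul_transpose, hHw]
  have hfq : ∀ x : Fin d → ℝ, 2 * (f x - f wstar)
      = (x - wstar) ⬝ᵥ (H *ᵥ (x - wstar)) := by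
    intro x
    rw [hf]
    simp only
    rw [Matrix.mulVec_sub, dotProduct_sub, sub_dotProduct,
      sub_dotProduct, hHw, hwHx x,
      dotProduct_comm x b, dotProduct_comm wstar b]
    ring
  have hquad : ∀ z : Fin d → ℝ, z ⬝ᵥ (H *ᵥ z) = ∑ j, lam j * ((Uᵀ *ᵥ z) j) ^ 2 := by
    intro z
    have h1 : H *ᵥ z = U *ᵥ (Matrix.diagonal lam *ᵥ (Uᵀ *ᵥ z)) := by
      rw [Matrix.mulVec_mulVec, Matrix.mulVec_mulVec, hH]
    rw [h1, Matrix.dotProduct_mulVec, ← Matrix.mulVec_transpose]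
    unfold dotProduct
    refine Finset.sum_congr rfl fun j _ => ?_
    rw [Matrix.mulVec_diagonal]
    ring
  -- eigenvector facts
  set u : Fin d → Fin d → ℝ := fun j k => U k j with hu
  have huu : ∀ j, u j ⬝ᵥ u j = 1 := by
    intro j
    have h1 := congrFun (congrFun hU j) j
    simpa [Matrix.mul_apply, Matrix.one_apply, dotProduct, hu] using h1
  have hUtu : ∀ j, Uᵀ *ᵥ u j = fun i => if i = j then 1 else 0 := by
    intro j
    funext i
    have h1 := congrFun (congrFun hU i) j
    simpa [Matrix.mul_apply, Matrix.one_apply, Matrix.mulVec, dotProduct, hu] using h1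
  have huHu : ∀ j, u j ⬝ᵥ (H *ᵥ u j) = lam j := by
    intro j
    rw [hquad, ]
    rw [Finset.sum_eq_single j]
    · rw [hUtu]; simp
    · intro i _ hne; rw [hUtu]; simp [hne]
    · intro h; exact absurd (Finset.mem_univ j) h
  have hlam_pos : ∀ j, 0 < lam j := by
    intro j
    have hne : u j ≠ 0 := by
      intro h0
      have := huu j
      rw [h0] at this
      simp [dotProduct] at this
    have := hpd.dotProduct_mulVec_pos hne
    rwa [star_trivial, huHu j] at this
  set g : ℕ → Fin d → Ω → ℝ := fun t j ω => (Uᵀ *ᵥ n t ω) j with hg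
  have hgsum : ∀ t j ω, g t j ω = ∑ k, U k j * n t ω k := by
    intro t j ω
    simp [hg, Matrix.mulVec, dotProduct, Matrix.transpose_apply]
  have hgL2 : ∀ t j, MemLp (g t j) 2 μ := by
    intro t j
    have : MemLp (fun ω => ∑ k, U k j * n t ω k) 2 μ := by
      apply memLp_finsetSum
      intro k _
      exact (hL2 t k).const_mul _
    convert this using 1
    exact funext (hgsum t j)
  have hgzero : ∀ t j, ∫ ω, g t j ω ∂μ = 0 := by
    intro t j
    have h1 : ∫ ω, g t j ω ∂μ = ∫ ω, ∑ k, U k j * n t ω k ∂μ := by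
      congr 1
    rw [h1, integral_finset_sum _ fun k _ => ((hL2 t k).integrable one_le_two).const_mul _]
    simp [integral_const_mul, hmean]
  have hgindep : ∀ s t, s ≠ t → ∀ j, IndepFun (g s j) (g t j) μ := by
    intro s t hst j
    have hφ : Measurable (fun x : Fin d → ℝ => (Uᵀ *ᵥ x) j) := by
      have : (fun x : Fin d → ℝ => (Uᵀ *ᵥ x) j) = fun x => ∑ k, Uᵀ j k * x k := by
        funext x; simp [Matrix.mulVec, dotProduct]
      rw [this]
      exact Finset.measurable_sum _ fun k _ => (measurable_pi_apply k).const_mul _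
    exact (hindep s t hst).comp hφ hφ
  have hgorth : ∀ s t, s ≠ t → ∀ j, ∫ ω, g s j ω * g t j ω ∂μ = 0 := by
    intro s t hst j
    have h := (hgindep s t hst j).integral_mul_eq_mul_integral
      ((hgL2 s j).integrable one_le_two).aestronglyMeasurable ((hgL2 t j).integrable one_le_two).aestronglyMeasurable
    have h2 : ∫ ω, g s j ω * g t j ω ∂μ = integral μ (g s j * g t j) := rfl
    rw [h2, h, hgzero, hgzero, mul_zero]
  have hgsq : ∀ t j, ∫ ω, (g t j ω) ^ 2 ∂μ ≤ σ ^ 2 * lam j := by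
    intro t j
    set C : Matrix (Fin d) (Fin d) ℝ := Matrix.of fun i k => ∫ ω, n t ω i * n t ω k ∂μ with hC
    have h1 : ∫ ω, (g t j ω) ^ 2 ∂μ = u j ⬝ᵥ (C *ᵥ u j) := by
      have hexp : ∀ ω, (g t j ω) ^ 2
          = ∑ k, ∑ l, (u j k * u j l) * (n t ω k * n t ω l) := by
        intro ω
        rw [hgsum, pow_two, Finset.sum_mul_sum]
        exact Finset.sum_congr rfl fun k _ => Finset.sum_congr rfl fun l _ => by
          rw [hu]; ring
      calc ∫ ω, (g t j ω) ^ 2 ∂μ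
          = ∫ ω, ∑ k, ∑ l, (u j k * u j l) * (n t ω k * n t ω l) ∂μ := by
            congr 1; funext ω; exact hexp ω
        _ = ∑ k, ∑ l, (u j k * u j l) * ∫ ω, n t ω k * n t ω l ∂μ := by
            rw [integral_finset_sum _ fun k _ => integrable_finset_sum _ fun l _ =>
              (memL2_mul_integrable (hL2 t k) (hL2 t l)).const_mul _]
            exact Finset.sum_congr rfl fun k _ => by
              rw [integral_finset_sum _ fun l _ =>
                (memL2_mul_integrable (hL2 t k) (hL2 t l)).const_mul _]
              exact Finset.sum_congr rfl fun l _ => integral_const_mul _ _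
        _ = u j ⬝ᵥ (C *ᵥ u j) := by
            simp only [dotProduct, Matrix.mulVec, hC, Matrix.of_apply,
              Finset.mul_sum]
            exact Finset.sum_congr rfl fun k _ => Finset.sum_congr rfl fun l _ => by ring
    have h2 := (hnoise t).dotProduct_mulVec_nonneg (u j)
    rw [star_trivial, Matrix.sub_mulVec, dotProduct_sub,
      Matrix.smul_mulVec, dotProduct_smul, huHu j] at h2
    rw [h1]
    have : σ ^ 2 • lam j = σ ^ 2 * lam j := rfl
    linarith [h2]
  set α : ℕ → Fin d → Ω → ℝ := fun t j ω => (Uᵀ *ᵥ (w t ω - wstar)) j with hα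
  set α' : ℕ → Fin d → Ω → ℝ := fun t j ω => (Uᵀ *ᵥ (w t ω + v t ω - wstar)) j with hα'
  -- identification of y
  have hy0 : ∀ j, y (j, 0) = (Uᵀ *ᵥ (w0 - wstar)) j := by
    intro j
    rw [hy, hx0]
    simp [shufflePerm, blkDiag2, Matrix.mulVec, dotProduct,
      Fintype.sum_sum_type, Matrix.transpose_apply, Matrix.fromBlocks_apply₁₁,
      Matrix.fromBlocks_apply₁₂, Matrix.fromBlocks_apply₂₁, Matrix.fromBlocks_apply₂₂]
  have hy1 : ∀ j, y (j, 1) = (Uᵀ *ᵥ (w0 + v0 - wstar)) j := by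
    intro j
    rw [hy, hx0]
    simp [shufflePerm, blkDiag2, Matrix.mulVec, dotProduct,
      Fintype.sum_sum_type, Matrix.transpose_apply, Matrix.fromBlocks_apply₁₁,
      Matrix.fromBlocks_apply₁₂, Matrix.fromBlocks_apply₂₁, Matrix.fromBlocks_apply₂₂]
  -- scalar recurrences
  have hvj : ∀ t j ω, (Uᵀ *ᵥ v t ω) j = α' t j ω - α t j ω := by
    intro t j ω
    rw [hα', hα]
    simp only
    rw [← Pi.sub_apply, ← Matrix.mulVec_sub]
    congr 2
    funext k
    simp only [Pi.sub_apply, Pi.add_apply]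
    ring
  have hα'1 : ∀ t j ω, α' (t + 1) j ω = α t j ω := by
    intro t j ω
    rw [hα', hα]
    simp only
    congr 2
    rw [hw t ω]
    funext k
    simp only [Pi.sub_apply, Pi.add_apply]
    ring
  have hα1 : ∀ t j ω, α (t + 1) j ω
      = (1 + β - η t * lam j) * α t j ω - β * α' t j ω + η t * g t j ω := by
    intro t j ω
    have hexp : w (t + 1) ω - wstar
        = (w t ω - wstar) - β • v t ω - η t • (H *ᵥ (w t ω - wstar)) + η t • n t ω := by
      rw [hw t ω, hv t ω]
      funext k
      simp only [Pi.sub_apply, Pi.add_apply, Pi.smul_apply, smul_eq_mul]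
      ring
    have h0 : α (t + 1) j ω = (Uᵀ *ᵥ (w (t + 1) ω - wstar)) j := rfl
    rw [h0, hexp, Matrix.mulVec_add, Matrix.mulVec_sub, Matrix.mulVec_sub,
      Matrix.mulVec_smul, Matrix.mulVec_smul, Matrix.mulVec_smul]
    simp only [Pi.add_apply, Pi.sub_apply, Pi.smul_apply, smul_eq_mul]
    rw [hmulVecUH]
    simp only
    rw [hvj t j ω]
    have hgt : (Uᵀ *ᵥ n t ω) j = g t j ω := rfl
    have hat : (Uᵀ *ᵥ (w t ω - wstar)) j = α t j ω := rfl
    rw [hgt, hat]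
    ring
  -- closed form
  set P : Fin d → ℕ → ℕ → Matrix (Fin 2) (Fin 2) ℝ :=
    fun j a b' => matProd (fun t => Tb t j) a b' with hP
  have hstate : ∀ t j ω, ![α t j ω, α' t j ω]
      = (P j 0 t) *ᵥ ![y (j, 0), y (j, 1)] + ∑ τ ∈ Finset.range t,
          (η τ * g τ j ω) • ((P j (τ + 1) t) *ᵥ ![1, 0]) := by
    intro t j ω
    induction t with
    | zero =>
      rw [Finset.range_zero, Finset.sum_empty, add_zero, hP]
      simp only
      rw [matProd_of_le _ le_rfl, Matrix.one_mulVec, hy0, hy1]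
      have h0 : α 0 j ω = (Uᵀ *ᵥ (w0 - wstar)) j := by
        show (Uᵀ *ᵥ (w 0 ω - wstar)) j = _
        rw [hw0]
      have h1 : α' 0 j ω = (Uᵀ *ᵥ (w0 + v0 - wstar)) j := by
        show (Uᵀ *ᵥ (w 0 ω + v 0 ω - wstar)) j = _
        rw [hw0, hv0]
      exact hbVec2Eq h0 h1
    | succ t ih =>
      have hstep : ![α (t + 1) j ω, α' (t + 1) j ω]
          = (Tb t j) *ᵥ ![α t j ω, α' t j ω] + (η t * g t j ω) • ![1, 0] := by
        rw [hTb, hbMulVecFin2, hbSmulVec2, hbAddVec2]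
        exact hbVec2Eq (by rw [hα1]; ring) (by rw [hα'1]; ring)
      rw [hstep, ih, Matrix.mulVec_add]
      have hsum : (Tb t j) *ᵥ (∑ τ ∈ Finset.range t,
            (η τ * g τ j ω) • ((P j (τ + 1) t) *ᵥ ![1, 0]))
          = ∑ τ ∈ Finset.range t,
            (η τ * g τ j ω) • ((P j (τ + 1) (t + 1)) *ᵥ ![1, 0]) := by
        rw [hbMulVecSum]
        refine Finset.sum_congr rfl fun τ hτ => ?_
        rw [Matrix.mulVec_smul, Matrix.mulVec_mulVec, hP]
        simp only
        rw [matProd_succ (fun s => Tb s j) (Nat.succ_le_of_lt (Finset.mem_range.mp hτ))]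
      rw [hsum, Matrix.mulVec_mulVec]
      have hP0 : Tb t j * P j 0 t = P j 0 (t + 1) := by
        rw [hP]
        simp only
        rw [matProd_succ (fun s => Tb s j) (Nat.zero_le t)]
      rw [hP0, Finset.sum_range_succ]
      have hPt : P j (t + 1) (t + 1) = 1 := matProd_of_le _ le_rfl
      rw [hPt, Matrix.one_mulVec, add_assoc]
  -- ==== final assembly ====
  have hscalar : ∀ (i : Fin 2) j ω, ![α T j ω, α' T j ω] i
      = ((P j 0 T) *ᵥ ![y (j, 0), y (j, 1)]) i
        + ∑ τ ∈ Finset.range T, (η τ * g τ j ω) * ((P j (τ + 1) T) *ᵥ ![1, 0]) i := by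
    intro i j ω
    rw [hstate T j ω]
    simp [Finset.sum_apply]
    fin_cases i <;> simp
  have hvar : ∀ τ j, ∫ ω, (η τ * g τ j ω) ^ 2 ∂μ
      = (η τ) ^ 2 * ∫ ω, (g τ j ω) ^ 2 ∂μ := by
    intro τ j
    have h1 : ∀ ω, (η τ * g τ j ω) ^ 2 = (η τ) ^ 2 * (g τ j ω) ^ 2 := fun ω => by ring
    calc ∫ ω, (η τ * g τ j ω) ^ 2 ∂μ = ∫ ω, (η τ) ^ 2 * (g τ j ω) ^ 2 ∂μ := by
          exact integral_congr_ae (Filter.Eventually.of_forall h1)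
      _ = (η τ) ^ 2 * ∫ ω, (g τ j ω) ^ 2 ∂μ := integral_const_mul _ _
  have hIi : ∀ j (i : Fin 2), ∫ ω, (![α T j ω, α' T j ω] i) ^ 2 ∂μ
      = (((P j 0 T) *ᵥ ![y (j, 0), y (j, 1)]) i) ^ 2
        + ∑ τ ∈ Finset.range T, (∫ ω, (η τ * g τ j ω) ^ 2 ∂μ)
            * (((P j (τ + 1) T) *ᵥ ![1, 0]) i) ^ 2 := by
    intro j i
    have haux := integral_sq_affine μ T (((P j 0 T) *ᵥ ![y (j, 0), y (j, 1)]) i)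
      (fun τ => ((P j (τ + 1) T) *ᵥ ![1, 0]) i) (fun τ ω => η τ * g τ j ω)
      (fun τ => (hgL2 τ j).const_mul _)
      (fun τ => by rw [integral_const_mul, hgzero, mul_zero])
      (fun τ τ' hne => by
        calc ∫ ω, (η τ * g τ j ω) * (η τ' * g τ' j ω) ∂μ
            = ∫ ω, (η τ * η τ') * (g τ j ω * g τ' j ω) ∂μ := by
              exact integral_congr_ae (Filter.Eventually.of_forall fun ω => by ring)
          _ = (η τ * η τ') * ∫ ω, g τ j ω * g τ' j ω ∂μ := integral_const_mul _ _
          _ = 0 := by rw [hgorth τ τ' hne j, mul_zero])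
    rw [← haux]
    refine integral_congr_ae (Filter.Eventually.of_forall fun ω => ?_)
    show (![α T j ω, α' T j ω] i) ^ 2 = _
    rw [hscalar i j ω]
  -- L2 and integrability of α T j
  have hαL2 : ∀ j, MemLp (fun ω => α T j ω) 2 μ := by
    intro j
    have heq : (fun ω => α T j ω)
        = fun ω => (((P j 0 T) *ᵥ ![y (j, 0), y (j, 1)]) 0)
          + ∑ τ ∈ Finset.range T,
              (η τ * ((P j (τ + 1) T) *ᵥ ![1, 0]) 0) * g τ j ω := by
      funext ω
      have h0 : α T j ω = ![α T j ω, α' T j ω] 0 := rfl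
      rw [h0, hscalar 0 j ω]
      congr 1
      exact Finset.sum_congr rfl fun τ _ => by ring
    rw [heq]
    exact (memLp_const (((P j 0 T) *ᵥ ![y (j, 0), y (j, 1)]) 0)).add (memLp_finsetSum (Finset.range T) fun τ _ => (hgL2 τ j).const_mul (η τ * ((P j (τ + 1) T) *ᵥ ![1, 0]) 0))
  have IntA2 : ∀ j, Integrable (fun ω => (α T j ω) ^ 2) μ := by
    intro j
    have := memL2_mul_integrable (hαL2 j) (hαL2 j)
    exact this.congr (Filter.Eventually.of_forall fun ω => by simp [pow_two])
  -- per-coordinate bound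
  have hBj : ∀ j, ∫ ω, (α T j ω) ^ 2 ∂μ
      ≤ specNorm (P j 0 T) ^ 2 * ((y (j, 0)) ^ 2 + (y (j, 1)) ^ 2)
        + ∑ τ ∈ Finset.range T,
            (η τ) ^ 2 * σ ^ 2 * lam j * specNorm (P j (τ + 1) T) ^ 2 := by
    intro j
    have h0 := hIi j 0
    have h1 := hIi j 1
    simp only [Matrix.cons_val_zero] at h0
    simp only [Matrix.cons_val_one, Matrix.head_cons] at h1
    have hInn : ∀ τ, 0 ≤ ∫ ω, (η τ * g τ j ω) ^ 2 ∂μ :=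
      fun τ => integral_nonneg fun ω => sq_nonneg _
    have hR1 : 0 ≤ (((P j 0 T) *ᵥ ![y (j, 0), y (j, 1)]) 1) ^ 2
        + ∑ τ ∈ Finset.range T, (∫ ω, (η τ * g τ j ω) ^ 2 ∂μ)
            * (((P j (τ + 1) T) *ᵥ ![1, 0]) 1) ^ 2 :=
      add_nonneg (sq_nonneg _) (Finset.sum_nonneg fun τ _ =>
        mul_nonneg (hInn τ) (sq_nonneg _))
    have hb := specNorm_mulVec_sq (P j 0 T) ![y (j, 0), y (j, 1)]
    rw [Fin.sum_univ_two, Fin.sum_univ_two] at hb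
    simp only [Matrix.cons_val_zero, Matrix.cons_val_one, Matrix.head_cons] at hb
    have hvτ : ∀ τ ∈ Finset.range T,
        (∫ ω, (η τ * g τ j ω) ^ 2 ∂μ) * ((((P j (τ + 1) T) *ᵥ ![1, 0]) 0) ^ 2
          + (((P j (τ + 1) T) *ᵥ ![1, 0]) 1) ^ 2)
        ≤ (η τ) ^ 2 * σ ^ 2 * lam j * specNorm (P j (τ + 1) T) ^ 2 := by
      intro τ _
      have hq := specNorm_mulVec_sq (P j (τ + 1) T) ![1, 0]
      rw [Fin.sum_univ_two, Fin.sum_univ_two] at hq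
      simp only [Matrix.cons_val_zero, Matrix.cons_val_one, Matrix.head_cons] at hq
      norm_num at hq
      have hIle : ∫ ω, (η τ * g τ j ω) ^ 2 ∂μ ≤ (η τ) ^ 2 * (σ ^ 2 * lam j) := by
        rw [hvar τ j]
        exact mul_le_mul_of_nonneg_left (hgsq τ j) (sq_nonneg _)
      have hqnn : 0 ≤ (((P j (τ + 1) T) *ᵥ ![1, 0]) 0) ^ 2
          + (((P j (τ + 1) T) *ᵥ ![1, 0]) 1) ^ 2 := add_nonneg (sq_nonneg _) (sq_nonneg _)
      calc (∫ ω, (η τ * g τ j ω) ^ 2 ∂μ) * _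
          ≤ ((η τ) ^ 2 * (σ ^ 2 * lam j)) * (specNorm (P j (τ + 1) T) ^ 2) :=
            mul_le_mul hIle (show ((P j (τ + 1) T *ᵥ ![1, 0]) 0) ^ 2 + ((P j (τ + 1) T *ᵥ ![1, 0]) 1) ^ 2
                ≤ specNorm (P j (τ + 1) T) ^ 2 by simpa [Matrix.mulVec, dotProduct, Fin.sum_univ_two] using hq) hqnn
              (mul_nonneg (sq_nonneg _) (mul_nonneg (sq_nonneg _) (hlam_pos j).le))
        _ = (η τ) ^ 2 * σ ^ 2 * lam j * specNorm (P j (τ + 1) T) ^ 2 := by ring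
    calc ∫ ω, (α T j ω) ^ 2 ∂μ
        = (((P j 0 T) *ᵥ ![y (j, 0), y (j, 1)]) 0) ^ 2
          + ∑ τ ∈ Finset.range T, (∫ ω, (η τ * g τ j ω) ^ 2 ∂μ)
              * (((P j (τ + 1) T) *ᵥ ![1, 0]) 0) ^ 2 := h0
      _ ≤ ((((P j 0 T) *ᵥ ![y (j, 0), y (j, 1)]) 0) ^ 2
            + (((P j 0 T) *ᵥ ![y (j, 0), y (j, 1)]) 1) ^ 2)
          + ∑ τ ∈ Finset.range T, (∫ ω, (η τ * g τ j ω) ^ 2 ∂μ)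
              * ((((P j (τ + 1) T) *ᵥ ![1, 0]) 0) ^ 2
                + (((P j (τ + 1) T) *ᵥ ![1, 0]) 1) ^ 2) := by
          have hcomb : ∑ τ ∈ Finset.range T, (∫ ω, (η τ * g τ j ω) ^ 2 ∂μ)
              * ((((P j (τ + 1) T) *ᵥ ![1, 0]) 0) ^ 2
                + (((P j (τ + 1) T) *ᵥ ![1, 0]) 1) ^ 2)
              = (∑ τ ∈ Finset.range T, (∫ ω, (η τ * g τ j ω) ^ 2 ∂μ)
                  * (((P j (τ + 1) T) *ᵥ ![1, 0]) 0) ^ 2)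
                + ∑ τ ∈ Finset.range T, (∫ ω, (η τ * g τ j ω) ^ 2 ∂μ)
                  * (((P j (τ + 1) T) *ᵥ ![1, 0]) 1) ^ 2 := by
            rw [← Finset.sum_add_distrib]
            exact Finset.sum_congr rfl fun τ _ => by ring
          rw [hcomb]
          linarith [hR1, h1]
      _ ≤ specNorm (P j 0 T) ^ 2 * ((y (j, 0)) ^ 2 + (y (j, 1)) ^ 2)
          + ∑ τ ∈ Finset.range T,
              (η τ) ^ 2 * σ ^ 2 * lam j * specNorm (P j (τ + 1) T) ^ 2 :=
          add_le_add hb (Finset.sum_le_sum hvτ)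
  -- function-level identity for f
  have hfw : ∀ ω, f (w T ω) = f wstar + (1 / 2) * ∑ j, lam j * (α T j ω) ^ 2 := by
    intro ω
    have h2 := hfq (w T ω)
    rw [hquad] at h2
    have h3 : ∑ j, lam j * ((Uᵀ *ᵥ (w T ω - wstar)) j) ^ 2
        = ∑ j, lam j * (α T j ω) ^ 2 := rfl
    rw [h3] at h2
    linarith
  have hIntSum : Integrable (fun ω => ∑ j, lam j * (α T j ω) ^ 2) μ :=
    integrable_finset_sum _ fun j _ => (IntA2 j).const_mul _
  have hEf : ∫ ω, f (w T ω) ∂μ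
      = f wstar + (1 / 2) * ∑ j, lam j * ∫ ω, (α T j ω) ^ 2 ∂μ := by
    calc ∫ ω, f (w T ω) ∂μ
        = ∫ ω, (f wstar + (1 / 2) * ∑ j, lam j * (α T j ω) ^ 2) ∂μ :=
          integral_congr_ae (Filter.Eventually.of_forall hfw)
      _ = f wstar + (1 / 2) * ∑ j, lam j * ∫ ω, (α T j ω) ^ 2 ∂μ := by
          rw [integral_add (integrable_const _) (hIntSum.const_mul _)]
          congr 1
          · simp
          · rw [integral_const_mul]
            congr 1
            rw [integral_finset_sum _ fun j _ => (IntA2 j).const_mul _]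
            exact Finset.sum_congr rfl fun j _ => integral_const_mul _ _
  rw [hEf]
  have hlhs : 2 * ((f wstar + (1 / 2) * ∑ j, lam j * ∫ ω, (α T j ω) ^ 2 ∂μ) - f wstar)
      = ∑ j, lam j * ∫ ω, (α T j ω) ^ 2 ∂μ := by ring
  rw [hlhs]
  calc ∑ j, lam j * ∫ ω, (α T j ω) ^ 2 ∂μ
      ≤ ∑ j, lam j * (specNorm (P j 0 T) ^ 2 * ((y (j, 0)) ^ 2 + (y (j, 1)) ^ 2)
          + ∑ τ ∈ Finset.range T,
              (η τ) ^ 2 * σ ^ 2 * lam j * specNorm (P j (τ + 1) T) ^ 2) :=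
        Finset.sum_le_sum fun j _ =>
          mul_le_mul_of_nonneg_left (hBj j) (hlam_pos j).le
    _ = (∑ j : Fin d, lam j * (specNorm (matProd (fun t => Tb t j) 0 T)) ^ 2 *
          ((y (j, 0)) ^ 2 + (y (j, 1)) ^ 2)) +
        σ ^ 2 * ∑ j : Fin d, (lam j) ^ 2 * ∑ τ ∈ Finset.range T,
          (η τ) ^ 2 * (specNorm (matProd (fun t => Tb t j) (τ + 1) T)) ^ 2 := by
        rw [Finset.mul_sum, ← Finset.sum_add_distrib]
        refine Finset.sum_congr rfl fun j _ => ?_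
        have hPdef : ∀ a b', P j a b' = matProd (fun t => Tb t j) a b' := fun a b' => rfl
        rw [mul_add]
        congr 1
        · rw [hPdef]; ring
        · have hx : lam j * ∑ τ ∈ Finset.range T,
              (η τ) ^ 2 * σ ^ 2 * lam j * specNorm (P j (τ + 1) T) ^ 2
              = σ ^ 2 * ((lam j) ^ 2 * ∑ τ ∈ Finset.range T,
                  (η τ) ^ 2 * (specNorm (matProd (fun t => Tb t j) (τ + 1) T)) ^ 2) := by
            rw [Finset.mul_sum, Finset.mul_sum, Finset.mul_sum]
            exact Finset.sum_congr rfl fun τ _ => by rw [hPdef]; ring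
          rw [hx]
end
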